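/- For an S-torsion-free R-module A, the kernel of λ_{S,A} : A → Λ_S(A) and the cokernel of λ_{S,A} are both modules over S⁻¹R (i.e., S-torsion-free and S-divisible), and Λ_S(A) is itself S-torsion-free. -/

import Mathlib

open Submodule

/-- The submodule `s·A` of an `R`-module `A`. -/
def smulTop (R : Type) [CommRing R] (s : R)
    (A : Type) [AddCommGroup A] [Module R A] : Submodule R A :=
  Ideal.span {s} • (⊤ : Submodule R A)

/-- The natural projection `A/tA → A/sA` when `s ∣ t`. -/
def transMap (R : Type) [CommRing R]
    (A : Type) [AddCommGroup A] [Module R A] (s t : R) (h : s ∣ t) :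
    (A ⧸ smulTop R t A) →ₗ[R] A ⧸ smulTop R s A :=
  Submodule.mapQ _ _ LinearMap.id (by
    rw [Submodule.comap_id]
    exact Submodule.smul_mono (Ideal.span_singleton_le_span_singleton.mpr h) le_rfl)

/-- The S-completion `Λ_S(A) = lim_{s ∈ S} A/sA`, realized as the submodule of compatible
families in `∏_{s ∈ S} A/sA`. -/
def sCompletion (R : Type) [CommRing R] (S : Submonoid R)
    (A : Type) [AddCommGroup A] [Module R A] :
    Submodule R (∀ s : S, A ⧸ smulTop R (s : R) A) where
  carrier := {x | ∀ (s t : S) (h : (s : R) ∣ (t : R)), transMap R A s t h (x t) = x s}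
  add_mem' := by
    intro x y hx hy s t h
    rw [Pi.add_apply, Pi.add_apply, map_add, hx s t h, hy s t h]
  zero_mem' := by
    intro s t h
    rw [Pi.zero_apply, Pi.zero_apply, map_zero]
  smul_mem' := by
    intro r x hx s t h
    rw [Pi.smul_apply, Pi.smul_apply, map_smul, hx s t h]

theorem mem_sCompletion (R : Type) [CommRing R] (S : Submonoid R)
    (A : Type) [AddCommGroup A] [Module R A]
    (x : ∀ s : S, A ⧸ smulTop R (s : R) A) :
    x ∈ sCompletion R S A ↔
      ∀ (s t : S) (h : (s : R) ∣ (t : R)), transMap R A s t h (x t) = x s :=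
  Iff.rfl

/-- The natural map `λ_{S,A} : A → Λ_S(A)`. -/
def lamMap (R : Type) [CommRing R] (S : Submonoid R)
    (A : Type) [AddCommGroup A] [Module R A] :
    A →ₗ[R] sCompletion R S A :=
  LinearMap.codRestrict (sCompletion R S A)
    (LinearMap.pi fun s : S => (smulTop R (s : R) A).mkQ)
    (by
      intro a s t h
      show transMap R A s t h ((smulTop R (t : R) A).mkQ a) = (smulTop R (s : R) A).mkQ a
      simp only [transMap, Submodule.mkQ_apply, Submodule.mapQ_apply, LinearMap.id_apply])

/-!
Everything reduces to cancelling a single `s ∈ S` on `A`, after reading a compatible family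
`x ∈ Λ_S(A)` at the index `s t` instead of `t`. If `s • x = 0`, a lift `a` of `x (s t)` has
`s a ∈ s t A`, so `a ∈ t A` and `x t = 0`. Given any `x`, the lifts `c t` of `x (s t)` agree
mod `s` with a lift `a` of `x s`, and the quotients `(c t - a) / s` form a compatible family `y`
with `x = s • y + λ a`. Divisibility of the kernel and injectivity on the cokernel are the same
cancellation in `A`, the latter because `λ a ∈ s Λ_S(A)` forces `a ∈ sA`.
-/

section

variable {R : Type} [CommRing R] {A : Type} [AddCommGroup A] [Module R A]

lemma mem_smulTop {s : R} {a : A} : a ∈ smulTop R s A ↔ ∃ b : A, s • b = a := by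
  simp only [smulTop, ideal_span_singleton_smul, mem_smul_pointwise_iff_exists, mem_top, true_and]

lemma smulTop_mk_eq_mk_iff {s : R} {a b : A} :
    (Submodule.Quotient.mk a : A ⧸ smulTop R s A) = Submodule.Quotient.mk b ↔
      ∃ c : A, s • c = a - b := by
  rw [Submodule.Quotient.eq, mem_smulTop]

lemma smulTop_mk_eq_zero_iff {s : R} {a : A} :
    (Submodule.Quotient.mk a : A ⧸ smulTop R s A) = 0 ↔ ∃ c : A, s • c = a := by
  rw [Submodule.Quotient.mk_eq_zero, mem_smulTop]

lemma smul_eq_zero_of_quotient_smulTop (s : R) (z : A ⧸ smulTop R s A) : s • z = 0 := by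
  obtain ⟨a, rfl⟩ := Submodule.Quotient.mk_surjective _ z
  rw [← Submodule.Quotient.mk_smul, smulTop_mk_eq_zero_iff]
  exact ⟨a, rfl⟩

lemma transMap_mk {s t : R} (h : s ∣ t) (a : A) :
    transMap R A s t h (Submodule.Quotient.mk a) = Submodule.Quotient.mk a :=
  rfl

variable {S : Submonoid R}

lemma lamMap_apply (a : A) (t : S) : (lamMap R S A a).1 t = Submodule.Quotient.mk a :=
  rfl

lemma mk_eq_apply_of_dvd {x : ∀ s : S, A ⧸ smulTop R (s : R) A} (hx : x ∈ sCompletion R S A)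
    {s t : S} (h : (s : R) ∣ t) {a : A} (ha : Submodule.Quotient.mk a = x t) :
    Submodule.Quotient.mk a = x s := by
  rw [← hx s t h, ← ha, transMap_mk]

lemma mem_ker_lamMap {a : A} :
    a ∈ LinearMap.ker (lamMap R S A) ↔ ∀ t : S, ∃ c : A, (t : R) • c = a := by
  simp only [LinearMap.mem_ker, Subtype.ext_iff, funext_iff, lamMap_apply,
    ZeroMemClass.coe_zero, Pi.zero_apply, smulTop_mk_eq_zero_iff]

lemma exists_smul_eq_of_mem_ker_lamMap {s : S} (hs : IsSMulRegular A (s : R)) {a : A}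
    (ha : a ∈ LinearMap.ker (lamMap R S A)) :
    ∃ b ∈ LinearMap.ker (lamMap R S A), (s : R) • b = a := by
  obtain ⟨b, rfl⟩ := mem_ker_lamMap.mp ha s
  refine ⟨b, mem_ker_lamMap.mpr fun t => ?_, rfl⟩
  obtain ⟨c, hc⟩ := mem_ker_lamMap.mp ha (s * t)
  exact ⟨c, hs (by simp only [← hc, Submonoid.coe_mul, mul_smul])⟩

lemma isSMulRegular_sCompletion {s : S} (hs : IsSMulRegular A (s : R)) :
    IsSMulRegular (sCompletion R S A) (s : R) := by
  rw [isSMulRegular_submodule_iff_right_eq_zero_of_smul]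
  refine fun x hxΛ hx => funext fun t => ?_
  obtain ⟨a, ha⟩ := Submodule.Quotient.mk_surjective _ (x (s * t))
  have hsa : (Submodule.Quotient.mk ((s : R) • a) : A ⧸ smulTop R ((s * t : S) : R) A) = 0 := by
    rw [Submodule.Quotient.mk_smul, ha]
    exact congrFun hx (s * t)
  obtain ⟨b, hb⟩ := smulTop_mk_eq_zero_iff.mp hsa
  rw [Submonoid.coe_mul, mul_smul] at hb
  rw [← mk_eq_apply_of_dvd hxΛ (dvd_mul_left _ _) ha, Pi.zero_apply, ← hs hb]
  exact smulTop_mk_eq_zero_iff.mpr ⟨b, rfl⟩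

lemma mem_range_lamMap_of_smul_mem {s : S} (hs : IsSMulRegular A (s : R))
    {x : sCompletion R S A} (hx : (s : R) • x ∈ LinearMap.range (lamMap R S A)) :
    x ∈ LinearMap.range (lamMap R S A) := by
  obtain ⟨a, ha⟩ := hx
  have hmk : (Submodule.Quotient.mk a : A ⧸ smulTop R (s : R) A) = 0 := by
    rw [← lamMap_apply, ha]
    exact smul_eq_zero_of_quotient_smulTop _ _
  obtain ⟨b, rfl⟩ := smulTop_mk_eq_zero_iff.mp hmk
  exact ⟨b, isSMulRegular_sCompletion hs (by simp only [← ha, map_smul])⟩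

lemma exists_smul_add_lamMap_eq {s : S} (hs : IsSMulRegular A (s : R)) (x : sCompletion R S A) :
    ∃ (y : sCompletion R S A) (a : A), (s : R) • y + lamMap R S A a = x := by
  obtain ⟨a, ha⟩ := Submodule.Quotient.mk_surjective _ (x.1 s)
  choose c hc using fun t : S => Submodule.Quotient.mk_surjective _ (x.1 (s * t))
  choose b hb using fun t : S =>
    smulTop_mk_eq_mk_iff.mp ((mk_eq_apply_of_dvd x.2 (dvd_mul_right _ _) (hc t)).trans ha.symm)
  have hy : (fun t : S => (Submodule.Quotient.mk (b t) : A ⧸ smulTop R (t : R) A))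
      ∈ sCompletion R S A := by
    intro t t' htt'
    have hst : ((s * t : S) : R) ∣ ((s * t' : S) : R) := mul_dvd_mul_left _ htt'
    obtain ⟨e, he⟩ :=
      smulTop_mk_eq_mk_iff.mp ((mk_eq_apply_of_dvd x.2 hst (hc t')).trans (hc t).symm)
    rw [transMap_mk, smulTop_mk_eq_mk_iff]
    refine ⟨e, hs ?_⟩
    simp only [smul_sub, hb, ← mul_smul, ← Submonoid.coe_mul, he, sub_sub_sub_cancel_right]
  refine ⟨⟨_, hy⟩, a, Subtype.ext (funext fun t => ?_)⟩
  show (s : R) • Submodule.Quotient.mk (b t) + Submodule.Quotient.mk a = x.1 t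
  rw [← Submodule.Quotient.mk_smul, ← Submodule.Quotient.mk_add, hb t, sub_add_cancel]
  exact mk_eq_apply_of_dvd x.2 (dvd_mul_left _ _) (hc t)

lemma Submodule.Quotient.bijective_smul {M : Type} [AddCommGroup M] [Module R M]
    (N : Submodule R M) (r : R) (hinj : ∀ x : M, r • x ∈ N → x ∈ N)
    (hsurj : ∀ x : M, ∃ y : M, r • y - x ∈ N) :
    Function.Bijective (fun z : M ⧸ N => r • z) := by
  refine ⟨fun z w hzw => ?_, fun z => ?_⟩
  · obtain ⟨x, rfl⟩ := Submodule.Quotient.mk_surjective N z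
    obtain ⟨y, rfl⟩ := Submodule.Quotient.mk_surjective N w
    simp only [← Submodule.Quotient.mk_smul, Submodule.Quotient.eq, ← smul_sub] at hzw ⊢
    exact hinj _ hzw
  · obtain ⟨x, rfl⟩ := Submodule.Quotient.mk_surjective N z
    obtain ⟨y, hy⟩ := hsurj x
    exact ⟨Submodule.Quotient.mk y, (Submodule.Quotient.eq N).mpr hy⟩

end

/-- For an S-torsion-free `R`-module `A`: the kernel and the cokernel of
`λ_{S,A} : A → Λ_S(A)` are modules over `S⁻¹R` (every `s ∈ S` acts bijectively on
them), and `Λ_S(A)` is itself S-torsion-free. -/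
theorem sCompletion_of_torsionFree
    (R : Type) [CommRing R] (S : Submonoid R)
    (A : Type) [AddCommGroup A] [Module R A]
    (htf : ∀ (s : S) (x : A), (s : R) • x = 0 → x = 0) :
    (∀ s : S, Function.Bijective
      (fun x : LinearMap.ker (lamMap R S A) => (s : R) • x)) ∧
    (∀ s : S, Function.Bijective
      (fun x : (sCompletion R S A) ⧸ LinearMap.range (lamMap R S A) => (s : R) • x)) ∧
    (∀ (s : S) (x : sCompletion R S A), (s : R) • x = 0 → x = 0) := by
  have hreg (s : S) : IsSMulRegular A (s : R) := .of_right_eq_zero_of_smul (htf s)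
  refine ⟨fun s => ⟨(hreg s).submodule _ _, fun ⟨a, ha⟩ => ?_⟩,
    fun s => ?_, fun s _ hx => (isSMulRegular_sCompletion (hreg s)).right_eq_zero_of_smul hx⟩
  · obtain ⟨b, hb, rfl⟩ := exists_smul_eq_of_mem_ker_lamMap (hreg s) ha
    exact ⟨⟨b, hb⟩, rfl⟩
  · refine Submodule.Quotient.bijective_smul _ _ (fun x => mem_range_lamMap_of_smul_mem (hreg s))
      fun x => ?_
    obtain ⟨y, a, rfl⟩ := exists_smul_add_lamMap_eq (hreg s) x
    exact ⟨y, by simp⟩
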